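/- Suppose every database can be made consistent by a finite sequence of repairing operations (realizability). If an inconsistency measure satisfies positivity and δ-continuity for some δ ≥ 1, then it satisfies progression. -/

import Mathlib

/-!
Realizability repairs an inconsistent `D`, which has positive measure, to a consistent database of
measure `0`; so some operation along the repair strictly decreases the measure at some database.
δ-continuity transfers that positive decrease, divided by `δ`, to an operation applied to `D`.
-/

theorem List.exists_mem_lt_of_foldl_lt {α β : Type*} [LinearOrder β] (f : α → β) :
    ∀ (l : List (α → α)) (a : α), f (l.foldl (fun x o => o x) a) < f a →
      ∃ o ∈ l, ∃ x, f (o x) < f x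
  | [], _, h => absurd h (lt_irrefl _)
  | o :: l, a, h => by
    by_cases ho : f (o a) < f a
    · exact ⟨o, mem_cons_self, a, ho⟩
    · obtain ⟨o', ho', x, hx⟩ := exists_mem_lt_of_foldl_lt f l (o a) (h.trans_le (not_lt.mp ho))
      exact ⟨o', mem_cons_of_mem o ho', x, hx⟩

theorem positivity_continuity_implies_progression_general {DB : Type*} (O : Set (DB → DB))
    (sat : DB → Prop) (I : DB → ℝ)
    (hzero : ∀ D, sat D → I D = 0)
    (hreal : ∀ D : DB, ∃ l : List (DB → DB), (∀ o ∈ l, o ∈ O) ∧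
      sat (l.foldl (fun D' o => o D') D))
    (δ : ℝ) (hδ : 1 ≤ δ)
    (hcont : ∀ D₁ D₂ : DB, ∀ o₁ ∈ O, ∃ o₂ ∈ O,
      (I D₁ - I (o₁ D₁)) / δ ≤ I D₂ - I (o₂ D₂))
    (hpos : ∀ D, ¬ sat D → 0 < I D) :
    ∀ D, ¬ sat D → ∃ o ∈ O, I (o D) < I D := by
  intro D hD
  obtain ⟨l, hlO, hsat⟩ := hreal D
  have hrepair : I (l.foldl (fun D' o => o D') D) < I D := by
    rw [hzero _ hsat]
    exact hpos D hD
  obtain ⟨o₁, ho₁l, D₁, hdrop⟩ := l.exists_mem_lt_of_foldl_lt I D hrepair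
  obtain ⟨o₂, ho₂, hcont₁⟩ := hcont D₁ D o₁ (hlO o₁ ho₁l)
  have hdrop_div : 0 < (I D₁ - I (o₁ D₁)) / δ := div_pos (sub_pos.mpr hdrop) (by linarith)
  exact ⟨o₂, ho₂, by linarith⟩

/-- If every database can be made consistent by a finite sequence of repairing operations
(realizability), and the inconsistency measure satisfies positivity and δ-continuity for
some δ ≥ 1, then it satisfies progression. -/
theorem positivity_continuity_implies_progression {DB : Type*} (O : Set (DB → DB))
    (sat : DB → Prop) (I : DB → ℝ)
    (hnonneg : ∀ D, 0 ≤ I D)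
    (hzero : ∀ D, sat D → I D = 0)
    (hreal : ∀ D : DB, ∃ l : List (DB → DB), (∀ o ∈ l, o ∈ O) ∧
      sat (l.foldl (fun D' o => o D') D))
    (δ : ℝ) (hδ : 1 ≤ δ)
    (hcont : ∀ D₁ D₂ : DB, ∀ o₁ ∈ O, ∃ o₂ ∈ O,
      (I D₁ - I (o₁ D₁)) / δ ≤ I D₂ - I (o₂ D₂))
    (hpos : ∀ D, ¬ sat D → 0 < I D) :
    ∀ D, ¬ sat D → ∃ o ∈ O, I (o D) < I D :=
  positivity_continuity_implies_progression_general O sat I hzero hreal δ hδ hcont hpos
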